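/- arXiv:1203.0283 — 8 statements merged into one kernel-verified Lean document; each statement's English description precedes it below -/
import Mathlib

section
/- In the non-associative algebra of a gDH system gDH(a₁,a₂,a₃;b₁,b₂,b₃;c), for each i ∈ {1,2,3} the standard basis vector e_i satisfies e_i * e_i = a_i · e_i, and the element e_i' := (c−a_i−b_i)e_i + (−c−a_i+b_j+b_k)(e_j+e_k) satisfies e_i' * e_i' = λ_i e_i' for some scalar λ_i (i.e., e_i' spans a one-dimensional subalgebra), where j,k are the two indices other than i. -/
/-! The product is the polarization of the quadratic map `Q`, and `Q` is homogeneous of degree two,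
so `x * x = Q x`. Both claims are therefore statements about `Q` alone: `Q eᵢ = aᵢ eᵢ` and
`Q eᵢ' = λᵢ eᵢ'` with `λᵢ = c (aᵢ + bⱼ + bₖ − c) − aᵢ (b₁ + b₂ + b₃)`, which are polynomial
identities checked coordinatewise. -/

theorem inv_two_smul_polar_self {K V W : Type*} [DivisionRing K] [AddCommGroup V] [Module K V]
    [AddCommGroup W] [Module K W] (h2 : (2 : K) ≠ 0) (Q : V → W)
    (hQ : ∀ (t : K) x, Q (t • x) = t ^ 2 • Q x) (x : V) :
    (2 : K)⁻¹ • (Q (x + x) - Q x - Q x) = Q x := by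
  rw [← two_smul K x, hQ, sub_sub, ← two_smul K (Q x), ← sub_smul, smul_smul]
  norm_num
  rw [inv_mul_cancel₀ h2, one_smul]

section GDH

variable {R : Type*} [CommRing R] (a b : Fin 3 → R) (c : R)

def gdhQuadratic (x : Fin 3 → R) : Fin 3 → R :=
  fun i => -a i * (x i - x (i + 1)) * (x (i + 2) - x i)
    + (b 0 * x 1 * x 2 + b 1 * x 2 * x 0 + b 2 * x 0 * x 1)
    - c * (x (i + 1) * x (i + 2))

/-- The vector `eᵢ'` of the paper. -/
def gdhAxis (i : Fin 3) : Fin 3 → R :=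
  (c - a i - b i) • Pi.single i 1
    + (-c - a i + b (i + 1) + b (i + 2)) • (Pi.single (i + 1) 1 + Pi.single (i + 2) 1)

theorem gdhQuadratic_smul (t : R) (x : Fin 3 → R) :
    gdhQuadratic a b c (t • x) = t ^ 2 • gdhQuadratic a b c x := by
  funext i
  simp only [gdhQuadratic, Pi.smul_apply, smul_eq_mul]
  ring

theorem gdhQuadratic_single (i : Fin 3) :
    gdhQuadratic a b c (Pi.single i 1) = a i • Pi.single i 1 := by
  funext j
  fin_cases i <;> fin_cases j <;> simp [gdhQuadratic]

theorem gdhQuadratic_gdhAxis (i : Fin 3) :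
    gdhQuadratic a b c (gdhAxis a b c i)
      = (c * (a i + b (i + 1) + b (i + 2) - c) - a i * (b 0 + b 1 + b 2)) • gdhAxis a b c i := by
  funext j
  fin_cases i <;> fin_cases j <;> simp [gdhQuadratic, gdhAxis] <;> ring

end GDH

/-- in the gDH algebra, `eᵢ * eᵢ = aᵢ eᵢ`, and each
`eᵢ' = (c−aᵢ−bᵢ)eᵢ + (−c−aᵢ+bⱼ+bₖ)(eⱼ+eₖ)` spans a one-dimensional subalgebra. -/
theorem stmt_3 (a b : Fin 3 → ℂ) (c : ℂ)
    (Q : (Fin 3 → ℂ) → Fin 3 → ℂ)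
    (hQ : ∀ x : Fin 3 → ℂ, ∀ i : Fin 3, Q x i =
      -a i * (x i - x (i + 1)) * (x (i + 2) - x i)
        + (b 0 * x 1 * x 2 + b 1 * x 2 * x 0 + b 2 * x 0 * x 1)
        - c * (x (i + 1) * x (i + 2)))
    (mul : (Fin 3 → ℂ) → (Fin 3 → ℂ) → Fin 3 → ℂ)
    (hmul : ∀ x y, mul x y = (2 : ℂ)⁻¹ • (Q (x + y) - Q x - Q y))
    (e : Fin 3 → Fin 3 → ℂ)
    (he : ∀ i : Fin 3, e i = Pi.single i 1)
    (e' : Fin 3 → Fin 3 → ℂ)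
    (he' : ∀ i : Fin 3, e' i =
      (c - a i - b i) • e i + (-c - a i + b (i + 1) + b (i + 2)) • (e (i + 1) + e (i + 2))) :
    (∀ i : Fin 3, mul (e i) (e i) = a i • e i) ∧
    (∀ i : Fin 3, ∃ lam : ℂ, mul (e' i) (e' i) = lam • e' i) := by
  have hQ_eq : Q = gdhQuadratic a b c := funext fun x => funext (hQ x)
  have mul_self : ∀ x, mul x x = gdhQuadratic a b c x := fun x => by
    rw [hmul, hQ_eq, inv_two_smul_polar_self two_ne_zero _ (gdhQuadratic_smul a b c)]
  have he'_eq : ∀ i, e' i = gdhAxis a b c i := fun i => by simp only [he', he, gdhAxis]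
  refine ⟨fun i => ?_, fun i => ?_⟩
  · rw [mul_self, he, gdhQuadratic_single]
  · rw [mul_self, he'_eq]
    exact ⟨_, gdhQuadratic_gdhAxis a b c i⟩
end

section
/- Any gDH system with a₁ = 0 and 2b₁ = b₂+b₃ = c ≠ 0 admits the two-parameter family of solutions x(τ) = (c−b₁−b₂−b₃)⁻¹(τ−τ*)⁻¹(1,1,1) + A(τ−τ*)⁻²(1,0,0), for arbitrary A ∈ ℂ and τ* ∈ ℂ, valid for τ ≠ τ*. -/
/-!
Put `u = (τ - τs)⁻¹` and `K = (c - b₁ - b₂ - b₃)⁻¹`, so that `x₂ = x₃ = K u` and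
`x₁ = K u + A u²`, while `u' = -u²`. The hypotheses give `c = 2 b₁` and `K = -b₁⁻¹`, i.e.
`b₁ K = -1`. Since `x₂ = x₃` and `b₂ + b₃ = c`, the right-hand sides collapse to
`b₁ K² u² + c K A u³` for `x₁` and to `b₁ K² u²` for `x₂`, `x₃`, which are
`-K u² - 2 A u³` and `-K u²`, the derivatives of the ansatz.
-/

section PoleDerivatives

variable {𝕜 : Type*} [NontriviallyNormedField 𝕜] {τs τ : 𝕜}

theorem hasDerivAt_inv_sub (hτ : τ ≠ τs) :
    HasDerivAt (fun t => (t - τs)⁻¹) (-((τ - τs)⁻¹ ^ 2)) τ := by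
  simpa [inv_pow] using (hasDerivAt_inv (sub_ne_zero.mpr hτ)).comp_sub_const τ τs

theorem hasDerivAt_inv_sub_sq (hτ : τ ≠ τs) :
    HasDerivAt (fun t => ((t - τs) ^ 2)⁻¹) (-(2 * (τ - τs)⁻¹ ^ 3)) τ := by
  simp_rw [← inv_pow]
  exact ((hasDerivAt_inv_sub hτ).fun_pow 2).congr_deriv (by ring)

end PoleDerivatives

/-- the two-parameter family of solutions of a gDH system with
`a₁ = 0` and `2b₁ = b₂+b₃ = c ≠ 0`. -/
theorem stmt_4 (a₁ a₂ a₃ b₁ b₂ b₃ c τs A : ℂ)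
    (ha₁ : a₁ = 0) (hb₁ : 2 * b₁ = b₂ + b₃) (hbc : b₂ + b₃ = c) (hc : c ≠ 0)
    (x₁ x₂ x₃ : ℂ → ℂ)
    (h₁ : ∀ τ, x₁ τ = (c - b₁ - b₂ - b₃)⁻¹ * (τ - τs)⁻¹ + A * ((τ - τs) ^ 2)⁻¹)
    (h₂ : ∀ τ, x₂ τ = (c - b₁ - b₂ - b₃)⁻¹ * (τ - τs)⁻¹)
    (h₃ : ∀ τ, x₃ τ = (c - b₁ - b₂ - b₃)⁻¹ * (τ - τs)⁻¹)
    (τ : ℂ) (hτ : τ ≠ τs) :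
    HasDerivAt x₁ (-a₁ * (x₁ τ - x₂ τ) * (x₃ τ - x₁ τ)
        + (b₁ * x₂ τ * x₃ τ + b₂ * x₃ τ * x₁ τ + b₃ * x₁ τ * x₂ τ)
        - c * (x₂ τ * x₃ τ)) τ ∧
    HasDerivAt x₂ (-a₂ * (x₂ τ - x₃ τ) * (x₁ τ - x₂ τ)
        + (b₁ * x₂ τ * x₃ τ + b₂ * x₃ τ * x₁ τ + b₃ * x₁ τ * x₂ τ)
        - c * (x₃ τ * x₁ τ)) τ ∧
    HasDerivAt x₃ (-a₃ * (x₃ τ - x₁ τ) * (x₂ τ - x₃ τ)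
        + (b₁ * x₂ τ * x₃ τ + b₂ * x₃ τ * x₁ τ + b₃ * x₁ τ * x₂ τ)
        - c * (x₁ τ * x₂ τ)) τ := by
  have hc₁ : c = 2 * b₁ := (hb₁.trans hbc).symm
  have hb₁K : b₁ * (c - b₁ - b₂ - b₃)⁻¹ = -1 := by
    have hb₁₀ : b₁ ≠ 0 := by rintro rfl; simp [hc₁] at hc
    rw [show c - b₁ - b₂ - b₃ = -b₁ by linear_combination -hbc, inv_neg, mul_neg,
      mul_inv_cancel₀ hb₁₀]
  set K := (c - b₁ - b₂ - b₃)⁻¹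
  set u := (τ - τs)⁻¹
  have e₁ : x₁ τ = K * u + A * u ^ 2 := by rw [h₁, inv_pow]
  have e₂ : x₂ τ = K * u := h₂ τ
  have e₃ : x₃ τ = K * u := h₃ τ
  have hx₂ : HasDerivAt x₂ (K * -(u ^ 2)) τ := funext h₂ ▸ (hasDerivAt_inv_sub hτ).const_mul K
  have hx₃ : HasDerivAt x₃ (K * -(u ^ 2)) τ := funext h₃ ▸ (hasDerivAt_inv_sub hτ).const_mul K
  have hx₁ : HasDerivAt x₁ (K * -(u ^ 2) + A * -(2 * u ^ 3)) τ := by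
    rw [funext h₁]
    exact ((hasDerivAt_inv_sub hτ).const_mul K).add ((hasDerivAt_inv_sub_sq hτ).const_mul A)
  clear_value K u
  refine ⟨?_, ?_, ?_⟩
  · convert hx₁ using 1
    rw [e₁, e₂, e₃, ha₁]
    linear_combination (K * u ^ 2 + 2 * A * u ^ 3) * hb₁K + K ^ 2 * u ^ 2 * hbc
      - K * A * u ^ 3 * hb₁
  · convert hx₂ using 1
    rw [e₁, e₂, e₃]
    linear_combination K * u ^ 2 * hb₁K + K * u * (K * u + A * u ^ 2) * hbc
  · convert hx₃ using 1
    rw [e₁, e₂, e₃]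
    linear_combination K * u ^ 2 * hb₁K + K * u * (K * u + A * u ^ 2) * hbc
end

section
/- Suppose x = x(τ) is a solution of a proper gDH system with pairwise non-coincident components, and define t(τ) = −(x₂−x₃)/(x₁−x₂). Then ṫ = c·n̄·ρ·(x₁−x₂)(x₂−x₃)(x₃−x₁)/(x₁−x₂)², i.e. ṫ = c·n̄·ρ·(x₂−x₃)(x₃−x₁)/(x₁−x₂), where ρ = (c−a₁−a₂−a₃)/(2c−b₁−b₂−b₃) and n̄ = (2c−b₁−b₂−b₃)/c. -/
/-!
In a gDH system the common term `b₁x₂x₃ + b₂x₃x₁ + b₃x₁x₂` cancels from every difference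
`ẋᵢ − ẋⱼ`, and what remains is divisible by `xᵢ − xⱼ`. Hence `u = x₂ − x₃` and `v = x₁ − x₂` have
logarithmic derivatives that are linear in the `xᵢ`, and their difference collapses to
`(a₁ + a₂ + a₃ − c)(x₃ − x₁)`; since `t = −u/v`, this is `ṫ = (c − a₁ − a₂ − a₃)·u(x₃ − x₁)/v`.
-/

variable {𝕜 : Type*} [NontriviallyNormedField 𝕜]

theorem HasDerivAt.div_of_logDeriv {u v : 𝕜 → 𝕜} {p q τ : 𝕜}
    (hu : HasDerivAt u (u τ * p) τ) (hv : HasDerivAt v (v τ * q) τ) (hvτ : v τ ≠ 0) :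
    HasDerivAt (fun s => u s / v s) (u τ / v τ * (p - q)) τ := by
  refine (hu.div hv hvτ).congr_deriv ?_
  field_simp

/-- One step of the cyclic gDH system: `(i, j, k)` is `(1, 2, 3)` or a cyclic shift of it, and
`Q` stands for the term `b₁x₂x₃ + b₂x₃x₁ + b₃x₁x₂` shared by all three equations. -/
theorem gdh_hasDerivAt_sub {aᵢ aⱼ c Q τ : 𝕜} {xᵢ xⱼ xₖ : 𝕜 → 𝕜}
    (hᵢ : HasDerivAt xᵢ (-aᵢ * (xᵢ τ - xⱼ τ) * (xₖ τ - xᵢ τ) + Q - c * (xⱼ τ * xₖ τ)) τ)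
    (hⱼ : HasDerivAt xⱼ (-aⱼ * (xⱼ τ - xₖ τ) * (xᵢ τ - xⱼ τ) + Q - c * (xₖ τ * xᵢ τ)) τ) :
    HasDerivAt (fun s => xᵢ s - xⱼ s)
      ((xᵢ τ - xⱼ τ) * (c * xₖ τ - aᵢ * (xₖ τ - xᵢ τ) + aⱼ * (xⱼ τ - xₖ τ))) τ := by
  refine (hᵢ.sub hⱼ).congr_deriv ?_
  ring

theorem stmt_7_general (a₁ a₂ a₃ b₁ b₂ b₃ c : ℂ)
    (hc : c ≠ 0) (hB : 2 * c - b₁ - b₂ - b₃ ≠ 0)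
    (x₁ x₂ x₃ : ℂ → ℂ) (τ : ℂ)
    (h₁ : HasDerivAt x₁ (-a₁ * (x₁ τ - x₂ τ) * (x₃ τ - x₁ τ)
        + (b₁ * x₂ τ * x₃ τ + b₂ * x₃ τ * x₁ τ + b₃ * x₁ τ * x₂ τ)
        - c * (x₂ τ * x₃ τ)) τ)
    (h₂ : HasDerivAt x₂ (-a₂ * (x₂ τ - x₃ τ) * (x₁ τ - x₂ τ)
        + (b₁ * x₂ τ * x₃ τ + b₂ * x₃ τ * x₁ τ + b₃ * x₁ τ * x₂ τ)
        - c * (x₃ τ * x₁ τ)) τ)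
    (h₃ : HasDerivAt x₃ (-a₃ * (x₃ τ - x₁ τ) * (x₂ τ - x₃ τ)
        + (b₁ * x₂ τ * x₃ τ + b₂ * x₃ τ * x₁ τ + b₃ * x₁ τ * x₂ τ)
        - c * (x₁ τ * x₂ τ)) τ)
    (h12 : x₁ τ ≠ x₂ τ) :
    HasDerivAt (fun s => -(x₂ s - x₃ s) / (x₁ s - x₂ s))
      (c * ((2 * c - b₁ - b₂ - b₃) / c) * ((c - a₁ - a₂ - a₃) / (2 * c - b₁ - b₂ - b₃))
        * ((x₂ τ - x₃ τ) * (x₃ τ - x₁ τ) / (x₁ τ - x₂ τ))) τ := by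
  have hquot := (gdh_hasDerivAt_sub h₂ h₃).div_of_logDeriv (gdh_hasDerivAt_sub h₁ h₂)
    (sub_ne_zero.mpr h12)
  have hcoeff : c * ((2 * c - b₁ - b₂ - b₃) / c) * ((c - a₁ - a₂ - a₃) / (2 * c - b₁ - b₂ - b₃))
      = c - a₁ - a₂ - a₃ := by
    rw [mul_div_cancel₀ _ hc, mul_div_cancel₀ _ hB]
  simp only [neg_div]
  refine hquot.neg.congr_deriv ?_
  rw [hcoeff]
  ring

/-- for a noncoincident solution of a proper gDH system,
`t = −(x₂−x₃)/(x₁−x₂)` satisfies `ṫ = c·n̄·ρ·(x₂−x₃)(x₃−x₁)/(x₁−x₂)`. -/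
theorem stmt_7 (a₁ a₂ a₃ b₁ b₂ b₃ c : ℂ)
    (hc : c ≠ 0) (hS : c - a₁ - a₂ - a₃ ≠ 0) (hB : 2 * c - b₁ - b₂ - b₃ ≠ 0)
    (x₁ x₂ x₃ : ℂ → ℂ) (τ : ℂ)
    (h₁ : HasDerivAt x₁ (-a₁ * (x₁ τ - x₂ τ) * (x₃ τ - x₁ τ)
        + (b₁ * x₂ τ * x₃ τ + b₂ * x₃ τ * x₁ τ + b₃ * x₁ τ * x₂ τ)
        - c * (x₂ τ * x₃ τ)) τ)
    (h₂ : HasDerivAt x₂ (-a₂ * (x₂ τ - x₃ τ) * (x₁ τ - x₂ τ)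
        + (b₁ * x₂ τ * x₃ τ + b₂ * x₃ τ * x₁ τ + b₃ * x₁ τ * x₂ τ)
        - c * (x₃ τ * x₁ τ)) τ)
    (h₃ : HasDerivAt x₃ (-a₃ * (x₃ τ - x₁ τ) * (x₂ τ - x₃ τ)
        + (b₁ * x₂ τ * x₃ τ + b₂ * x₃ τ * x₁ τ + b₃ * x₁ τ * x₂ τ)
        - c * (x₁ τ * x₂ τ)) τ)
    (h12 : x₁ τ ≠ x₂ τ) (h23 : x₂ τ ≠ x₃ τ) (h31 : x₃ τ ≠ x₁ τ) :
    HasDerivAt (fun s => -(x₂ s - x₃ s) / (x₁ s - x₂ s))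
      (c * ((2 * c - b₁ - b₂ - b₃) / c) * ((c - a₁ - a₂ - a₃) / (2 * c - b₁ - b₂ - b₃))
        * ((x₂ τ - x₃ τ) * (x₃ τ - x₁ τ) / (x₁ τ - x₂ τ))) τ :=
  stmt_7_general a₁ a₂ a₃ b₁ b₂ b₃ c hc hB x₁ x₂ x₃ τ h₁ h₂ h₃ h12
end

section
/- The rational map Φ: ℂ³ → ℂ³ given by x₁ = (x̃₁+x̃₃)/2, x₂ = x̃₂, x₃ = [x̃₂(x̃₁+x̃₃) − 2x̃₁x̃₃]/[2x̃₂ − (x̃₁+x̃₃)] is solution-preserving from gDH(ã₁,ã₂,ã₁; b̃₁,b̃₂,b̃₁; c̃) to gDH(2ã₁, ã₂, 2ã₁+ã₂−c̃; c̃−b̃₂, b̃₂, 2b̃₁+b̃₂−c̃; c̃): if x̃(τ) solves the first system with 2x̃₂(τ) − x̃₁(τ) − x̃₃(τ) ≠ 0 on its domain, then x(τ) := Φ(x̃(τ)) solves the second. -/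
/-!
Along a solution `ỹ` of the source system, `x₁ = (ỹ₁ + ỹ₃)/2`, `x₂ = ỹ₂` and `x₃ = N/D` with
`N = ỹ₂(ỹ₁ + ỹ₃) - 2ỹ₁ỹ₃`, `D = 2ỹ₂ - (ỹ₁ + ỹ₃)`. Differentiating, `ẋ₃ = (Ṅ - x₃Ḋ)/D`, and each of
the three determining equations `Q(Φ(ỹ)) = DΦ(ỹ)·Q̃(ỹ)` becomes a polynomial identity modulo the
single relation `x₃ D = N` defining the graph of `Φ₃`.
-/

variable {𝕜 : Type*}

section Algebra

variable [Field 𝕜]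

def gdhCoupling (b₁ b₂ b₃ x₁ x₂ x₃ : 𝕜) : 𝕜 :=
  b₁ * x₂ * x₃ + b₂ * x₃ * x₁ + b₃ * x₁ * x₂

/-- The equations of `gDH(a₁,a₂,a₃; b₁,b₂,b₃; c)` read `ẋ₁ = gdhComponent a₁ c S x₁ x₂ x₃`,
`ẋ₂ = gdhComponent a₂ c S x₂ x₃ x₁`, `ẋ₃ = gdhComponent a₃ c S x₃ x₁ x₂` with
`S = gdhCoupling b₁ b₂ b₃ x₁ x₂ x₃`. -/
def gdhComponent (a c S u v w : 𝕜) : 𝕜 :=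
  -a * (u - v) * (w - u) + S - c * (v * w)

def quadMapNum (y₁ y₂ y₃ : 𝕜) : 𝕜 := y₂ * (y₁ + y₃) - 2 * y₁ * y₃

def quadMapDen (y₁ y₂ y₃ : 𝕜) : 𝕜 := 2 * y₂ - (y₁ + y₃)

variable [CharZero 𝕜] {at₁ at₂ bt₁ bt₂ ct y₁ y₂ y₃ x₃ : 𝕜}

theorem quadMap_determining₁ (hx₃ : x₃ * quadMapDen y₁ y₂ y₃ = quadMapNum y₁ y₂ y₃) :
    (gdhComponent at₁ ct (gdhCoupling bt₁ bt₂ bt₁ y₁ y₂ y₃) y₁ y₂ y₃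
        + gdhComponent at₁ ct (gdhCoupling bt₁ bt₂ bt₁ y₁ y₂ y₃) y₃ y₁ y₂) / 2
      = gdhComponent (2 * at₁) ct
          (gdhCoupling (ct - bt₂) bt₂ (2 * bt₁ + bt₂ - ct) ((y₁ + y₃) / 2) y₂ x₃)
          ((y₁ + y₃) / 2) y₂ x₃ := by
  unfold gdhComponent gdhCoupling quadMapNum quadMapDen at *
  linear_combination (bt₂ / 2 - at₁) * hx₃

theorem quadMap_determining₂ (hx₃ : x₃ * quadMapDen y₁ y₂ y₃ = quadMapNum y₁ y₂ y₃) :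
    gdhComponent at₂ ct (gdhCoupling bt₁ bt₂ bt₁ y₁ y₂ y₃) y₂ y₃ y₁
      = gdhComponent at₂ ct
          (gdhCoupling (ct - bt₂) bt₂ (2 * bt₁ + bt₂ - ct) ((y₁ + y₃) / 2) y₂ x₃)
          y₂ x₃ ((y₁ + y₃) / 2) := by
  unfold gdhComponent gdhCoupling quadMapNum quadMapDen at *
  linear_combination ((at₂ + bt₂ - ct) / 2) * hx₃

theorem quadMap_determining₃ {v₁ v₂ v₃ : 𝕜} (hD : quadMapDen y₁ y₂ y₃ ≠ 0)
    (hx₃ : x₃ * quadMapDen y₁ y₂ y₃ = quadMapNum y₁ y₂ y₃)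
    (hv₁ : v₁ = gdhComponent at₁ ct (gdhCoupling bt₁ bt₂ bt₁ y₁ y₂ y₃) y₁ y₂ y₃)
    (hv₂ : v₂ = gdhComponent at₂ ct (gdhCoupling bt₁ bt₂ bt₁ y₁ y₂ y₃) y₂ y₃ y₁)
    (hv₃ : v₃ = gdhComponent at₁ ct (gdhCoupling bt₁ bt₂ bt₁ y₁ y₂ y₃) y₃ y₁ y₂) :
    (v₂ * (y₁ + y₃) + y₂ * (v₁ + v₃) - 2 * (v₁ * y₃ + y₁ * v₃) - x₃ * (2 * v₂ - (v₁ + v₃)))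
        / quadMapDen y₁ y₂ y₃
      = gdhComponent (2 * at₁ + at₂ - ct) ct
          (gdhCoupling (ct - bt₂) bt₂ (2 * bt₁ + bt₂ - ct) ((y₁ + y₃) / 2) y₂ x₃)
          x₃ ((y₁ + y₃) / 2) y₂ := by
  rw [div_eq_iff hD]
  subst hv₁ hv₂ hv₃
  unfold gdhComponent gdhCoupling quadMapNum quadMapDen at *
  linear_combination ((ct - at₂ - 2 * at₁) * x₃ + (2 * at₁ + bt₂ - 2 * ct) * y₂
    + (at₂ - bt₂ - ct) / 2 * (y₁ + y₃)) * hx₃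

end Algebra

section Calculus

variable [NontriviallyNormedField 𝕜]

def IsGDHSolutionAt (a₁ a₂ a₃ b₁ b₂ b₃ c : 𝕜) (x₁ x₂ x₃ : 𝕜 → 𝕜) (τ : 𝕜) : Prop :=
  HasDerivAt x₁ (gdhComponent a₁ c (gdhCoupling b₁ b₂ b₃ (x₁ τ) (x₂ τ) (x₃ τ))
      (x₁ τ) (x₂ τ) (x₃ τ)) τ ∧
    HasDerivAt x₂ (gdhComponent a₂ c (gdhCoupling b₁ b₂ b₃ (x₁ τ) (x₂ τ) (x₃ τ))
      (x₂ τ) (x₃ τ) (x₁ τ)) τ ∧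
    HasDerivAt x₃ (gdhComponent a₃ c (gdhCoupling b₁ b₂ b₃ (x₁ τ) (x₂ τ) (x₃ τ))
      (x₃ τ) (x₁ τ) (x₂ τ)) τ

variable {y₁ y₂ y₃ : 𝕜 → 𝕜} {v₁ v₂ v₃ τ : 𝕜}

theorem HasDerivAt.quadMapNum_div_quadMapDen (h₁ : HasDerivAt y₁ v₁ τ)
    (h₂ : HasDerivAt y₂ v₂ τ) (h₃ : HasDerivAt y₃ v₃ τ)
    (hD : quadMapDen (y₁ τ) (y₂ τ) (y₃ τ) ≠ 0) :
    HasDerivAt (fun s ↦ quadMapNum (y₁ s) (y₂ s) (y₃ s) / quadMapDen (y₁ s) (y₂ s) (y₃ s))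
      ((v₂ * (y₁ τ + y₃ τ) + y₂ τ * (v₁ + v₃) - 2 * (v₁ * y₃ τ + y₁ τ * v₃)
          - quadMapNum (y₁ τ) (y₂ τ) (y₃ τ) / quadMapDen (y₁ τ) (y₂ τ) (y₃ τ)
            * (2 * v₂ - (v₁ + v₃))) / quadMapDen (y₁ τ) (y₂ τ) (y₃ τ)) τ := by
  have hN : HasDerivAt (fun s ↦ quadMapNum (y₁ s) (y₂ s) (y₃ s))
      (v₂ * (y₁ τ + y₃ τ) + y₂ τ * (v₁ + v₃) - 2 * (v₁ * y₃ τ + y₁ τ * v₃)) τ :=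
    ((h₂.fun_mul (h₁.fun_add h₃)).fun_sub ((h₁.const_mul 2).fun_mul h₃)).congr_deriv (by ring)
  have hD' : HasDerivAt (fun s ↦ quadMapDen (y₁ s) (y₂ s) (y₃ s)) (2 * v₂ - (v₁ + v₃)) τ :=
    (h₂.const_mul 2).fun_sub (h₁.fun_add h₃)
  exact (hN.fun_div hD' hD).congr_deriv (by field_simp)

theorem IsGDHSolutionAt.quadMap {at₁ at₂ bt₁ bt₂ ct : 𝕜} [CharZero 𝕜]
    (h : IsGDHSolutionAt at₁ at₂ at₁ bt₁ bt₂ bt₁ ct y₁ y₂ y₃ τ)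
    (hD : quadMapDen (y₁ τ) (y₂ τ) (y₃ τ) ≠ 0) :
    IsGDHSolutionAt (2 * at₁) at₂ (2 * at₁ + at₂ - ct) (ct - bt₂) bt₂ (2 * bt₁ + bt₂ - ct) ct
      (fun s ↦ (y₁ s + y₃ s) / 2) y₂
      (fun s ↦ quadMapNum (y₁ s) (y₂ s) (y₃ s) / quadMapDen (y₁ s) (y₂ s) (y₃ s)) τ := by
  obtain ⟨h₁, h₂, h₃⟩ := h
  have hx₃ := div_mul_cancel₀ (quadMapNum (y₁ τ) (y₂ τ) (y₃ τ)) hD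
  exact ⟨((h₁.fun_add h₃).div_const 2).congr_deriv (quadMap_determining₁ hx₃),
    h₂.congr_deriv (quadMap_determining₂ hx₃),
    (h₁.quadMapNum_div_quadMapDen h₂ h₃ hD).congr_deriv
      (quadMap_determining₃ hD hx₃ rfl rfl rfl)⟩

end Calculus

/-- the quadratic map `Φ` is solution-preserving from
`gDH(ã₁,ã₂,ã₁; b̃₁,b̃₂,b̃₁; c̃)` to
`gDH(2ã₁, ã₂, 2ã₁+ã₂−c̃; c̃−b̃₂, b̃₂, 2b̃₁+b̃₂−c̃; c̃)`. -/
theorem stmt_8 (at₁ at₂ bt₁ bt₂ ct : ℂ) (U : Set ℂ)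
    (y₁ y₂ y₃ x₁ x₂ x₃ : ℂ → ℂ)
    (hx₁ : ∀ s, x₁ s = (y₁ s + y₃ s) / 2)
    (hx₂ : ∀ s, x₂ s = y₂ s)
    (hx₃ : ∀ s, x₃ s = (y₂ s * (y₁ s + y₃ s) - 2 * y₁ s * y₃ s)
        / (2 * y₂ s - (y₁ s + y₃ s)))
    (hden : ∀ τ ∈ U, 2 * y₂ τ - (y₁ τ + y₃ τ) ≠ 0)
    (hsol : ∀ τ ∈ U,
      HasDerivAt y₁ (-at₁ * (y₁ τ - y₂ τ) * (y₃ τ - y₁ τ)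
        + (bt₁ * y₂ τ * y₃ τ + bt₂ * y₃ τ * y₁ τ + bt₁ * y₁ τ * y₂ τ)
        - ct * (y₂ τ * y₃ τ)) τ ∧
      HasDerivAt y₂ (-at₂ * (y₂ τ - y₃ τ) * (y₁ τ - y₂ τ)
        + (bt₁ * y₂ τ * y₃ τ + bt₂ * y₃ τ * y₁ τ + bt₁ * y₁ τ * y₂ τ)
        - ct * (y₃ τ * y₁ τ)) τ ∧
      HasDerivAt y₃ (-at₁ * (y₃ τ - y₁ τ) * (y₂ τ - y₃ τ)
        + (bt₁ * y₂ τ * y₃ τ + bt₂ * y₃ τ * y₁ τ + bt₁ * y₁ τ * y₂ τ)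
        - ct * (y₁ τ * y₂ τ)) τ) :
    ∀ τ ∈ U,
      HasDerivAt x₁ (-(2 * at₁) * (x₁ τ - x₂ τ) * (x₃ τ - x₁ τ)
        + ((ct - bt₂) * x₂ τ * x₃ τ + bt₂ * x₃ τ * x₁ τ
            + (2 * bt₁ + bt₂ - ct) * x₁ τ * x₂ τ)
        - ct * (x₂ τ * x₃ τ)) τ ∧
      HasDerivAt x₂ (-at₂ * (x₂ τ - x₃ τ) * (x₁ τ - x₂ τ)
        + ((ct - bt₂) * x₂ τ * x₃ τ + bt₂ * x₃ τ * x₁ τ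
            + (2 * bt₁ + bt₂ - ct) * x₁ τ * x₂ τ)
        - ct * (x₃ τ * x₁ τ)) τ ∧
      HasDerivAt x₃ (-(2 * at₁ + at₂ - ct) * (x₃ τ - x₁ τ) * (x₂ τ - x₃ τ)
        + ((ct - bt₂) * x₂ τ * x₃ τ + bt₂ * x₃ τ * x₁ τ
            + (2 * bt₁ + bt₂ - ct) * x₁ τ * x₂ τ)
        - ct * (x₁ τ * x₂ τ)) τ := by
  intro τ hτ
  obtain ⟨rfl, rfl, rfl⟩ : x₁ = _ ∧ x₂ = _ ∧ x₃ = _ := ⟨funext hx₁, funext hx₂, funext hx₃⟩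
  exact IsGDHSolutionAt.quadMap (hsol τ hτ) (hden τ hτ)
end

section
/- The function x(τ) = (−c₂−(c₁+c₃)sin τ)/((c₁+c₃+c₂ sin τ)cos τ), ((−c₂−(c₁−c₃)sin τ)/((c₁−c₃+c₂ sin τ)cos τ), −tan τ) is a solution of the system ẋ₁ = x₁(x₁−x₂−x₃), ẋ₂ = x₂(x₂−x₁−x₃), ẋ₃ = −x₁x₂ for any (c₁,c₂,c₃) ∈ ℂ³ satisfying c₁² − c₂² − c₃² = 0, on any domain where all denominators are nonzero. -/
/-!
Put `y a b s = (-b - a sin s) / ((a + b sin s) cos s)`, so that `x₁ = y (c₁ + c₃) c₂` and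
`x₂ = y (c₁ - c₃) c₂`. For all `a, b` the function `y a b` solves the Riccati equation
`y' = y² + y tan − sec²`, and on the conic `b² = a a'` the numerators and denominators of
`y a b` and `y a' b` have equal products, so `y a b · y a' b = sec²`. Since `x₃ = −tan`, these
two facts are exactly the three equations of the system.
-/

open Complex

noncomputable def riccatiSol (a b s : ℂ) : ℂ :=
  (-b - a * sin s) / ((a + b * sin s) * cos s)

theorem hasDerivAt_riccatiSol {a b τ : ℂ} (hd : a + b * sin τ ≠ 0) (hcos : cos τ ≠ 0) :
    HasDerivAt (riccatiSol a b)
      (riccatiSol a b τ ^ 2 + riccatiSol a b τ * tan τ - 1 / cos τ ^ 2) τ := by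
  have hnum : HasDerivAt (fun s => -b - a * sin s) (-(a * cos τ)) τ := by
    simpa using ((hasDerivAt_sin τ).const_mul a).const_sub (-b)
  have hden : HasDerivAt (fun s => (a + b * sin s) * cos s)
      (b * cos τ * cos τ + (a + b * sin τ) * -sin τ) τ :=
    (((hasDerivAt_sin τ).const_mul b).const_add a).mul (hasDerivAt_cos τ)
  refine (hnum.div hden (mul_ne_zero hd hcos)).congr_deriv ?_
  rw [riccatiSol, tan_eq_sin_div_cos]
  field_simp
  linear_combination (b ^ 2 - a ^ 2) * sin_sq_add_cos_sq τ

theorem riccatiSol_mul_riccatiSol {a a' b s : ℂ} (hb : b ^ 2 = a * a')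
    (hd : a + b * sin s ≠ 0) (hd' : a' + b * sin s ≠ 0) :
    riccatiSol a b s * riccatiSol a' b s = 1 / cos s ^ 2 := by
  have hnum : (-b - a * sin s) * (-b - a' * sin s) = (a + b * sin s) * (a' + b * sin s) := by
    linear_combination (1 - sin s ^ 2) * hb
  rw [riccatiSol, riccatiSol, div_mul_div_comm, hnum,
    show (a + b * sin s) * cos s * ((a' + b * sin s) * cos s)
      = (a + b * sin s) * (a' + b * sin s) * cos s ^ 2 by ring,
    div_mul_cancel_left₀ (mul_ne_zero hd hd'), one_div]

/-- the general solution of `gDH(1,1,0;0,0,0;1)` parametrized by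
the curve `c₁² − c₂² − c₃² = 0`. -/
theorem stmt_15 (c₁ c₂ c₃ : ℂ) (hC : c₁ ^ 2 - c₂ ^ 2 - c₃ ^ 2 = 0)
    (x₁ x₂ x₃ : ℂ → ℂ)
    (hx₁ : ∀ s, x₁ s = (-c₂ - (c₁ + c₃) * Complex.sin s)
        / ((c₁ + c₃ + c₂ * Complex.sin s) * Complex.cos s))
    (hx₂ : ∀ s, x₂ s = (-c₂ - (c₁ - c₃) * Complex.sin s)
        / ((c₁ - c₃ + c₂ * Complex.sin s) * Complex.cos s))
    (hx₃ : ∀ s, x₃ s = -Complex.tan s)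
    (τ : ℂ)
    (hd₁ : c₁ + c₃ + c₂ * Complex.sin τ ≠ 0)
    (hd₂ : c₁ - c₃ + c₂ * Complex.sin τ ≠ 0)
    (hcos : Complex.cos τ ≠ 0) :
    HasDerivAt x₁ (x₁ τ * (x₁ τ - x₂ τ - x₃ τ)) τ ∧
    HasDerivAt x₂ (x₂ τ * (x₂ τ - x₁ τ - x₃ τ)) τ ∧
    HasDerivAt x₃ (-(x₁ τ * x₂ τ)) τ := by
  obtain rfl : x₁ = riccatiSol (c₁ + c₃) c₂ := funext hx₁
  obtain rfl : x₂ = riccatiSol (c₁ - c₃) c₂ := funext hx₂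
  obtain rfl : x₃ = fun s => -tan s := funext hx₃
  have hprod := riccatiSol_mul_riccatiSol (by linear_combination -hC) hd₁ hd₂
  refine ⟨?_, ?_, ?_⟩
  · refine (hasDerivAt_riccatiSol hd₁ hcos).congr_deriv ?_
    linear_combination hprod
  · refine (hasDerivAt_riccatiSol hd₂ hcos).congr_deriv ?_
    linear_combination hprod
  · refine (hasDerivAt_tan hcos).neg.congr_deriv ?_
    rw [hprod, one_div]
end

section
/- The function x(τ) = (1+2τ²)/(τ(1−2τ²)), (1−2τ²)/(τ(1+2τ²)), 1/τ) is a solution of the system ẋ₁ = x₁(x₁−x₂−x₃), ẋ₂ = x₂(x₂−x₁−x₃), ẋ₃ = −x₁x₂ on any domain avoiding the poles τ ∈ {0, ±1/√2, ±i/√2}. -/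
/-!
Both `x₁` and `x₂` are instances of `s ↦ (1 + c s²) / (s (1 - c s²))`, with `c = 2` and `c = -2`,
whose derivative is `(c² s⁴ + 4 c s² - 1) / (s (1 - c s²))²` by the quotient rule. Since
`x₁ x₂ = 1 / s²`, the third equation is the derivative of `1 / s`, and the first two reduce to
rational identities in `τ`.
-/

theorem hasDerivAt_one_add_mul_sq_div {𝕜 : Type*} [NontriviallyNormedField 𝕜] (c τ : 𝕜)
    (hτ : τ ≠ 0) (hc : 1 - c * τ ^ 2 ≠ 0) :
    HasDerivAt (fun s => (1 + c * s ^ 2) / (s * (1 - c * s ^ 2)))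
      ((c ^ 2 * τ ^ 4 + 4 * c * τ ^ 2 - 1) / (τ * (1 - c * τ ^ 2)) ^ 2) τ := by
  have hsq : HasDerivAt (fun s : 𝕜 => c * s ^ 2) (c * (2 * τ)) τ := by
    simpa using (hasDerivAt_pow 2 τ).const_mul c
  have hden : HasDerivAt (fun s : 𝕜 => s * (1 - c * s ^ 2))
      (1 * (1 - c * τ ^ 2) + τ * -(c * (2 * τ))) τ :=
    (hasDerivAt_id τ).mul (by simpa using hsq.const_sub 1)
  refine ((hsq.const_add 1).fun_div hden (mul_ne_zero hτ hc)).congr_deriv ?_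
  ring

/-- the special rational solution `x^{[3']}` of
`gDH(1,1,0;0,0,0;1)`. -/
theorem stmt_16 (x₁ x₂ x₃ : ℂ → ℂ)
    (hx₁ : ∀ s, x₁ s = (1 + 2 * s ^ 2) / (s * (1 - 2 * s ^ 2)))
    (hx₂ : ∀ s, x₂ s = (1 - 2 * s ^ 2) / (s * (1 + 2 * s ^ 2)))
    (hx₃ : ∀ s, x₃ s = 1 / s)
    (τ : ℂ) (hτ0 : τ ≠ 0) (h1 : 1 - 2 * τ ^ 2 ≠ 0) (h2 : 1 + 2 * τ ^ 2 ≠ 0) :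
    HasDerivAt x₁ (x₁ τ * (x₁ τ - x₂ τ - x₃ τ)) τ ∧
    HasDerivAt x₂ (x₂ τ * (x₂ τ - x₁ τ - x₃ τ)) τ ∧
    HasDerivAt x₃ (-(x₁ τ * x₂ τ)) τ := by
  have hd₁ : HasDerivAt x₁ _ τ :=
    (hasDerivAt_one_add_mul_sq_div 2 τ hτ0 h1).congr_of_eventuallyEq (.of_forall hx₁)
  have hd₂ : HasDerivAt x₂ _ τ :=
    hasDerivAt_one_add_mul_sq_div (-2) τ hτ0 (by rwa [neg_mul, sub_neg_eq_add])
      |>.congr_of_eventuallyEq (.of_forall fun s => by rw [hx₂]; ring_nf)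
  have hd₃ : HasDerivAt x₃ _ τ :=
    (hasDerivAt_inv hτ0).congr_of_eventuallyEq (.of_forall fun s => by rw [hx₃, one_div])
  refine ⟨hd₁.congr_deriv ?_, hd₂.congr_deriv ?_, hd₃.congr_deriv ?_⟩
  · rw [hx₁, hx₂, hx₃]; field_simp; ring
  · simp only [hx₁, hx₂, hx₃, neg_mul, sub_neg_eq_add]; field_simp; ring
  · rw [hx₁, hx₂, div_mul_div_comm, mul_mul_mul_comm, mul_comm (1 - _),
      div_mul_cancel_right₀ (mul_ne_zero h2 h1), sq]
end

section
/- For every integer N ≥ 2 and λ ≠ 0, the functions u(τ) = λ⁻¹ (c₊τ^{N/2}+c₋τ^{−N/2}) / (τ[(1−N)c₊τ^{N/2}+(1+N)c₋τ^{−N/2}]) with c₊+c₋ = 1, and u(τ) = λ⁻¹·2/((1−N²)τ), are solutions of the Chazy-XI equation u''' = λ(N²−1)u·u'' + λ(N²−13)(u')² + 12λ²(N²−1)u²u' − 3λ³(N²−1)²u⁴, on any simply connected domain in ℂ∖{0} avoiding zeros of the denominators. -/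
/-!
Chazy-XI(N) is homogeneous of weight one in `(λ⁻¹, u)`, so it suffices to treat `λ = 1`.
Put `x = c₊ τ^{N/2}` and `y = c₋ τ^{-N/2}`; the Euler equations `τ x' = (N/2) x`, `τ y' = -(N/2) y`
turn `g = (x + y) / ((1 - N) x + (1 + N) y)` into a solution of the Riccati equation
`τ g' = (N² g² - (g - 1)²) / 2`. Along this Riccati flow each derivative of `g / τ` is a polynomial
in `g` over a power of `τ`, and the equation for `g / τ` becomes a polynomial identity in `g`.
For `c / τ` the equation reduces to `c ((N² - 1) c + 2) ((N² - 1) c² + 2 c - 1) = 0`, whose middle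
factor gives the rational solution.
-/

open Set

def ChazyXI (lam N : ℂ) (U : Set ℂ) (u : ℂ → ℂ) : Prop :=
  ∀ s ∈ U, deriv (deriv (deriv u)) s =
    lam * (N ^ 2 - 1) * u s * deriv (deriv u) s
      + lam * (N ^ 2 - 13) * (deriv u s) ^ 2
      + 12 * lam ^ 2 * (N ^ 2 - 1) * (u s) ^ 2 * deriv u s
      - 3 * lam ^ 3 * (N ^ 2 - 1) ^ 2 * (u s) ^ 4

namespace ChazyXI

variable {lam N : ℂ} {U : Set ℂ} {u w : ℂ → ℂ}

theorem congr (hU : IsOpen U) (huw : EqOn u w U) (hw : ChazyXI lam N U w) :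
    ChazyXI lam N U u := by
  have h₁ : EqOn (deriv u) (deriv w) U := huw.deriv hU
  have h₂ : EqOn (deriv (deriv u)) (deriv (deriv w)) U := h₁.deriv hU
  have h₃ : EqOn (deriv (deriv (deriv u))) (deriv (deriv (deriv w))) U := h₂.deriv hU
  intro s hs
  rw [h₃ hs, h₂ hs, h₁ hs, huw hs]
  exact hw s hs

theorem of_hasDerivAt {w₁ w₂ w₃ : ℂ → ℂ} (hU : IsOpen U)
    (h₁ : ∀ s ∈ U, HasDerivAt w (w₁ s) s) (h₂ : ∀ s ∈ U, HasDerivAt w₁ (w₂ s) s)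
    (h₃ : ∀ s ∈ U, HasDerivAt w₂ (w₃ s) s)
    (heq : ∀ s ∈ U, w₃ s = lam * (N ^ 2 - 1) * w s * w₂ s + lam * (N ^ 2 - 13) * w₁ s ^ 2
      + 12 * lam ^ 2 * (N ^ 2 - 1) * w s ^ 2 * w₁ s - 3 * lam ^ 3 * (N ^ 2 - 1) ^ 2 * w s ^ 4) :
    ChazyXI lam N U w := by
  have d₁ : EqOn (deriv w) w₁ U := fun s hs => (h₁ s hs).deriv
  have d₂ : EqOn (deriv (deriv w)) w₂ U := fun s hs => by
    rw [d₁.deriv hU hs]; exact (h₂ s hs).deriv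
  have d₃ : EqOn (deriv (deriv (deriv w))) w₃ U := fun s hs => by
    rw [d₂.deriv hU hs]; exact (h₃ s hs).deriv
  intro s hs
  rw [d₃ hs, d₂ hs, d₁ hs]
  exact heq s hs

theorem inv_mul (hw : ChazyXI 1 N U w) : ChazyXI lam N U (fun s => lam⁻¹ * w s) := by
  intro s hs
  simp only [deriv_const_mul_field', hw s hs]
  rcases eq_or_ne lam 0 with rfl | hlam
  · simp
  · field_simp

theorem const_div {c : ℂ} (hU : IsOpen U) (hU0 : ∀ s ∈ U, s ≠ 0) (hc : (N ^ 2 - 1) * c = -2) :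
    ChazyXI 1 N U (fun s => c / s) := by
  refine of_hasDerivAt (w₁ := fun s => -c / s ^ 2) (w₂ := fun s => 2 * c / s ^ 3)
    (w₃ := fun s => -6 * c / s ^ 4) hU (fun s hs => ?_) (fun s hs => ?_) (fun s hs => ?_)
    (fun s hs => ?_)
  all_goals have hs0 := hU0 s hs
  · refine ((hasDerivAt_const s c).div (hasDerivAt_id' s) hs0).congr_deriv ?_
    field_simp
    ring
  · refine ((hasDerivAt_const s (-c)).div (hasDerivAt_pow 2 s) (pow_ne_zero 2 hs0)).congr_deriv ?_
    field_simp
    ring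
  · refine ((hasDerivAt_const s (2 * c)).div (hasDerivAt_pow 3 s)
      (pow_ne_zero 3 hs0)).congr_deriv ?_
    field_simp
    ring
  · field_simp
    linear_combination 3 * c * ((N ^ 2 - 1) * c ^ 2 + 2 * c - 1) * hc

theorem div_of_riccati {g : ℂ → ℂ} (hU : IsOpen U) (hU0 : ∀ s ∈ U, s ≠ 0)
    (hg : ∀ s ∈ U, HasDerivAt g ((N ^ 2 * g s ^ 2 - (g s - 1) ^ 2) / (2 * s)) s) :
    ChazyXI 1 N U (fun s => g s / s) := by
  refine of_hasDerivAt (w₁ := fun s => ((N ^ 2 - 1) * g s ^ 2 - 1) / (2 * s ^ 2))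
    (w₂ := fun s => ((N ^ 2 - 1) ^ 2 * g s ^ 3 - (N ^ 2 - 1) * g s + 2) / (2 * s ^ 3))
    (w₃ := fun s => (3 * (N ^ 2 - 1) ^ 3 * g s ^ 4 - 4 * (N ^ 2 - 1) ^ 2 * g s ^ 2
      + 4 * (N ^ 2 - 1) * g s + (N ^ 2 - 13)) / (4 * s ^ 4))
    hU (fun s hs => ?_) (fun s hs => ?_) (fun s hs => ?_) (fun s hs => ?_)
  all_goals have hs0 := hU0 s hs
  · refine ((hg s hs).div (hasDerivAt_id' s) hs0).congr_deriv ?_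
    field_simp
    ring
  · refine (((((hg s hs).pow 2).const_mul (N ^ 2 - 1)).sub_const 1).div
      ((hasDerivAt_pow 2 s).const_mul 2) (by simp [hs0])).congr_deriv ?_
    simp only [Pi.pow_apply]
    field_simp
    ring
  · refine ((((((hg s hs).pow 3).const_mul ((N ^ 2 - 1) ^ 2)).sub
      ((hg s hs).const_mul (N ^ 2 - 1))).add_const 2).div
      ((hasDerivAt_pow 3 s).const_mul 2) (by simp [hs0])).congr_deriv ?_
    simp only [Pi.pow_apply, Pi.sub_apply]
    field_simp
    ring
  · field_simp
    ring

end ChazyXI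

theorem hasDerivAt_const_mul_cexp_mul {L : ℂ → ℂ} {s : ℂ} (c a : ℂ) (hL : HasDerivAt L s⁻¹ s) :
    HasDerivAt (fun t => c * Complex.exp (a * L t)) (a * (c * Complex.exp (a * L s)) / s) s :=
  (((hL.const_mul a).cexp).const_mul c).congr_deriv (by ring)

/-- Both `τ g'` and `(n² g² - (g - 1)²) / 2` equal `2 n² x y / ((1 - n) x + (1 + n) y)²`. -/
theorem hasDerivAt_div_of_euler {x y : ℂ → ℂ} {n s : ℂ} (hs : s ≠ 0)
    (hx : HasDerivAt x (n / 2 * x s / s) s) (hy : HasDerivAt y (-(n / 2) * y s / s) s)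
    (hQ : (1 - n) * x s + (1 + n) * y s ≠ 0) :
    HasDerivAt (fun t => (x t + y t) / ((1 - n) * x t + (1 + n) * y t))
      ((n ^ 2 * ((x s + y s) / ((1 - n) * x s + (1 + n) * y s)) ^ 2
        - ((x s + y s) / ((1 - n) * x s + (1 + n) * y s) - 1) ^ 2) / (2 * s)) s := by
  refine ((hx.add hy).div ((hx.const_mul (1 - n)).add (hy.const_mul (1 + n))) hQ).congr_deriv ?_
  simp only [Pi.add_apply]
  rw [div_sub_one hQ]
  field_simp
  ring

theorem stmt_18_general (N : ℕ) (hN : 2 ≤ N) (lam : ℂ)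
    (cp cm : ℂ)
    (U : Set ℂ) (hU : IsOpen U) (hU0 : ∀ s ∈ U, s ≠ 0)
    (L : ℂ → ℂ)
    (hLD : ∀ s ∈ U, HasDerivAt L s⁻¹ s)
    (u v : ℂ → ℂ)
    (hu : ∀ s ∈ U, u s = lam⁻¹ *
      ((cp * Complex.exp (((N : ℂ) / 2) * L s) + cm * Complex.exp (-((N : ℂ) / 2) * L s)) /
        (s * ((1 - (N : ℂ)) * cp * Complex.exp (((N : ℂ) / 2) * L s)
          + (1 + (N : ℂ)) * cm * Complex.exp (-((N : ℂ) / 2) * L s)))))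
    (hud : ∀ s ∈ U,
      s * ((1 - (N : ℂ)) * cp * Complex.exp (((N : ℂ) / 2) * L s)
        + (1 + (N : ℂ)) * cm * Complex.exp (-((N : ℂ) / 2) * L s)) ≠ 0)
    (hv : ∀ s ∈ U, v s = lam⁻¹ * (2 / ((1 - (N : ℂ) ^ 2) * s))) :
    (∀ s ∈ U, deriv (deriv (deriv u)) s =
      lam * ((N : ℂ) ^ 2 - 1) * u s * deriv (deriv u) s
        + lam * ((N : ℂ) ^ 2 - 13) * (deriv u s) ^ 2
        + 12 * lam ^ 2 * ((N : ℂ) ^ 2 - 1) * (u s) ^ 2 * deriv u s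
        - 3 * lam ^ 3 * ((N : ℂ) ^ 2 - 1) ^ 2 * (u s) ^ 4) ∧
    (∀ s ∈ U, deriv (deriv (deriv v)) s =
      lam * ((N : ℂ) ^ 2 - 1) * v s * deriv (deriv v) s
        + lam * ((N : ℂ) ^ 2 - 13) * (deriv v s) ^ 2
        + 12 * lam ^ 2 * ((N : ℂ) ^ 2 - 1) * (v s) ^ 2 * deriv v s
        - 3 * lam ^ 3 * ((N : ℂ) ^ 2 - 1) ^ 2 * (v s) ^ 4) := by
  have hN2 : 1 - (N : ℂ) ^ 2 ≠ 0 := by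
    rw [sub_ne_zero]
    exact_mod_cast (Nat.one_lt_pow two_ne_zero hN).ne
  set x := fun t => cp * Complex.exp ((N : ℂ) / 2 * L t)
  set y := fun t => cm * Complex.exp (-((N : ℂ) / 2) * L t)
  have hg := fun s (hs : s ∈ U) => hasDerivAt_div_of_euler (x := x) (y := y) (hU0 s hs)
      (hasDerivAt_const_mul_cexp_mul cp _ (hLD s hs)) (hasDerivAt_const_mul_cexp_mul cm _ (hLD s hs))
      (by simpa only [x, y, mul_assoc] using (mul_ne_zero_iff.mp (hud s hs)).2)
  refine ⟨(ChazyXI.div_of_riccati hU hU0 hg).inv_mul.congr hU fun s hs => ?_,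
    (ChazyXI.const_div hU hU0 (c := 2 / (1 - (N : ℂ) ^ 2)) ?_).inv_mul.congr hU fun s hs => ?_⟩
  · rw [hu s hs, mul_comm s, ← div_div]
    simp only [x, y, mul_assoc]
  · field_simp
    ring
  · rw [hv s hs, div_div]

/-- the explicit two-parameter and rational solutions of the
Chazy-XI(N) equation, for every integer `N ≥ 2` and `λ ≠ 0`; the powers
`τ^{±N/2}` are defined via a fixed branch `L` of the logarithm on the
simply connected domain `U ⊆ ℂ∖{0}`. -/
theorem stmt_18 (N : ℕ) (hN : 2 ≤ N) (lam : ℂ) (hlam : lam ≠ 0)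
    (cp cm : ℂ) (hcpm : cp + cm = 1)
    (U : Set ℂ) (hU : IsOpen U) (hU0 : ∀ s ∈ U, s ≠ 0)
    (L : ℂ → ℂ)
    (hLexp : ∀ s ∈ U, Complex.exp (L s) = s)
    (hLD : ∀ s ∈ U, HasDerivAt L s⁻¹ s)
    (u v : ℂ → ℂ)
    (hu : ∀ s ∈ U, u s = lam⁻¹ *
      ((cp * Complex.exp (((N : ℂ) / 2) * L s) + cm * Complex.exp (-((N : ℂ) / 2) * L s)) /
        (s * ((1 - (N : ℂ)) * cp * Complex.exp (((N : ℂ) / 2) * L s)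
          + (1 + (N : ℂ)) * cm * Complex.exp (-((N : ℂ) / 2) * L s)))))
    (hud : ∀ s ∈ U,
      s * ((1 - (N : ℂ)) * cp * Complex.exp (((N : ℂ) / 2) * L s)
        + (1 + (N : ℂ)) * cm * Complex.exp (-((N : ℂ) / 2) * L s)) ≠ 0)
    (hv : ∀ s ∈ U, v s = lam⁻¹ * (2 / ((1 - (N : ℂ) ^ 2) * s))) :
    (∀ s ∈ U, deriv (deriv (deriv u)) s =
      lam * ((N : ℂ) ^ 2 - 1) * u s * deriv (deriv u) s
        + lam * ((N : ℂ) ^ 2 - 13) * (deriv u s) ^ 2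
        + 12 * lam ^ 2 * ((N : ℂ) ^ 2 - 1) * (u s) ^ 2 * deriv u s
        - 3 * lam ^ 3 * ((N : ℂ) ^ 2 - 1) ^ 2 * (u s) ^ 4) ∧
    (∀ s ∈ U, deriv (deriv (deriv v)) s =
      lam * ((N : ℂ) ^ 2 - 1) * v s * deriv (deriv v) s
        + lam * ((N : ℂ) ^ 2 - 13) * (deriv v s) ^ 2
        + 12 * lam ^ 2 * ((N : ℂ) ^ 2 - 1) * (v s) ^ 2 * deriv v s
        - 3 * lam ^ 3 * ((N : ℂ) ^ 2 - 1) ^ 2 * (v s) ^ 4) :=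
  stmt_18_general N hN lam cp cm U hU hU0 L hLD u v hu hud hv
end

section
/- The function x(τ) = ((1+e^τ−C̄·exp(e^τ))/(1−C̄·exp(e^τ)), 1, (1−C̄(1−e^τ)exp(e^τ))/(1−C̄·exp(e^τ))) is, for any C̄ ∈ ℂ, a solution of the system ẋ₁ = x₃(x₁−x₂), ẋ₂ = 0, ẋ₃ = x₁(x₃−x₂) on any domain where 1−C̄·exp(e^τ) ≠ 0. Moreover I₁ = x₂·log((x₃−x₂)/(x₁−x₂)) + (x₃−x₁) and I₂ = x₂ are first integrals of this system. -/
/-!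
Write `E = e^τ` and `D = 1 - C̄ exp(e^τ)`. Then `x₁ = (D + E)/D` and `x₃ = (D + E(1 - D))/D`,
and the system follows from the two identities `E' = E` and `D' = E(D - 1)` alone.

For the first integral, `r = (x₃ - x₂)/(x₁ - x₂)` satisfies `r' = r (x₁ - x₃)` because `x₂` is
constant, so `log r` has derivative `x₁ - x₃`, while `(x₃ - x₁)' = x₂ (x₃ - x₁)`.
-/

section
variable {𝕜 : Type*} [NontriviallyNormedField 𝕜]

section ExplicitSolution
variable {E D : 𝕜 → 𝕜} {τ : 𝕜}

theorem hasDerivAt_explicitSolution₁ (hE : HasDerivAt E (E τ) τ)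
    (hD : HasDerivAt D (E τ * (D τ - 1)) τ) (hD₀ : D τ ≠ 0) :
    HasDerivAt (fun s => (D s + E s) / D s)
      ((D τ + E τ * (1 - D τ)) / D τ * ((D τ + E τ) / D τ - 1)) τ := by
  refine ((hD.add hE).div hD hD₀).congr_deriv ?_
  simp only [Pi.add_apply]
  field_simp
  ring

theorem hasDerivAt_explicitSolution₃ (hE : HasDerivAt E (E τ) τ)
    (hD : HasDerivAt D (E τ * (D τ - 1)) τ) (hD₀ : D τ ≠ 0) :
    HasDerivAt (fun s => (D s + E s * (1 - D s)) / D s)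
      ((D τ + E τ) / D τ * ((D τ + E τ * (1 - D τ)) / D τ - 1)) τ := by
  refine ((hD.add (hE.mul ((hasDerivAt_const τ 1).sub hD))).div hD hD₀).congr_deriv ?_
  simp only [Pi.add_apply, Pi.sub_apply, Pi.mul_apply]
  field_simp
  ring

end ExplicitSolution

section FirstIntegral
variable {y₁ y₂ y₃ L : 𝕜 → 𝕜} {σ : 𝕜}

theorem hasDerivAt_sub_div_sub (hy₁ : HasDerivAt y₁ (y₃ σ * (y₁ σ - y₂ σ)) σ)
    (hy₂ : HasDerivAt y₂ 0 σ) (hy₃ : HasDerivAt y₃ (y₁ σ * (y₃ σ - y₂ σ)) σ)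
    (h₁₂ : y₁ σ ≠ y₂ σ) :
    HasDerivAt (fun s => (y₃ s - y₂ s) / (y₁ s - y₂ s))
      ((y₃ σ - y₂ σ) / (y₁ σ - y₂ σ) * (y₁ σ - y₃ σ)) σ := by
  have h₁₂' : y₁ σ - y₂ σ ≠ 0 := sub_ne_zero.mpr h₁₂
  refine ((hy₃.sub hy₂).div (hy₁.sub hy₂) h₁₂').congr_deriv ?_
  simp only [Pi.sub_apply]
  field_simp
  ring

theorem hasDerivAt_firstIntegral_eq_zero (hy₁ : HasDerivAt y₁ (y₃ σ * (y₁ σ - y₂ σ)) σ)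
    (hy₂ : HasDerivAt y₂ 0 σ) (hy₃ : HasDerivAt y₃ (y₁ σ * (y₃ σ - y₂ σ)) σ)
    (h₁₂ : y₁ σ ≠ y₂ σ) (h₃₂ : y₃ σ ≠ y₂ σ)
    (hL : HasDerivAt L ((y₃ σ - y₂ σ) / (y₁ σ - y₂ σ))⁻¹ ((y₃ σ - y₂ σ) / (y₁ σ - y₂ σ))) :
    HasDerivAt (fun s => y₂ s * L ((y₃ s - y₂ s) / (y₁ s - y₂ s)) + (y₃ s - y₁ s)) 0 σ := by
  have hr : (y₃ σ - y₂ σ) / (y₁ σ - y₂ σ) ≠ 0 :=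
    div_ne_zero (sub_ne_zero.mpr h₃₂) (sub_ne_zero.mpr h₁₂)
  have hlog : HasDerivAt (fun s => L ((y₃ s - y₂ s) / (y₁ s - y₂ s))) (y₁ σ - y₃ σ) σ := by
    refine (hL.comp σ (hasDerivAt_sub_div_sub hy₁ hy₂ hy₃ h₁₂)).congr_deriv ?_
    rw [inv_mul_cancel_left₀ hr]
  refine ((hy₂.mul hlog).add (hy₃.sub hy₁)).congr_deriv ?_
  ring

end FirstIntegral
end

open Complex in
theorem hasDerivAt_one_sub_mul_exp_exp (c τ : ℂ) :
    HasDerivAt (fun s => 1 - c * exp (exp s))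
      (exp τ * ((1 - c * exp (exp τ)) - 1)) τ := by
  refine ((hasDerivAt_const τ 1).sub ((hasDerivAt_exp τ).cexp.const_mul c)).congr_deriv ?_
  ring

/-- the explicit general solution of `gDH(0,0,0;0,1,0;1)`
(system e.IV(∞,1,∞)), and its first integrals
`I₁ = x₂·log((x₃−x₂)/(x₁−x₂)) + (x₃−x₁)` and `I₂ = x₂`. -/
theorem stmt_19 (Cb : ℂ) (x₁ x₂ x₃ : ℂ → ℂ)
    (hx₁ : ∀ s, x₁ s = (1 + Complex.exp s - Cb * Complex.exp (Complex.exp s))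
        / (1 - Cb * Complex.exp (Complex.exp s)))
    (hx₂ : ∀ s, x₂ s = 1)
    (hx₃ : ∀ s, x₃ s = (1 - Cb * (1 - Complex.exp s) * Complex.exp (Complex.exp s))
        / (1 - Cb * Complex.exp (Complex.exp s)))
    (τ : ℂ) (hden : 1 - Cb * Complex.exp (Complex.exp τ) ≠ 0) :
    (HasDerivAt x₁ (x₃ τ * (x₁ τ - x₂ τ)) τ ∧
     HasDerivAt x₂ 0 τ ∧
     HasDerivAt x₃ (x₁ τ * (x₃ τ - x₂ τ)) τ) ∧
    (∀ (y₁ y₂ y₃ L : ℂ → ℂ) (σ : ℂ),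
      HasDerivAt y₁ (y₃ σ * (y₁ σ - y₂ σ)) σ →
      HasDerivAt y₂ 0 σ →
      HasDerivAt y₃ (y₁ σ * (y₃ σ - y₂ σ)) σ →
      y₁ σ ≠ y₂ σ →
      y₃ σ ≠ y₂ σ →
      HasDerivAt L ((y₃ σ - y₂ σ) / (y₁ σ - y₂ σ))⁻¹ ((y₃ σ - y₂ σ) / (y₁ σ - y₂ σ)) →
      (HasDerivAt (fun s => y₂ s * L ((y₃ s - y₂ s) / (y₁ s - y₂ s)) + (y₃ s - y₁ s)) 0 σ ∧
       HasDerivAt y₂ 0 σ)) := by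
  refine ⟨?_, fun y₁ y₂ y₃ L σ hy₁ hy₂ hy₃ h₁₂ h₃₂ hL =>
    ⟨hasDerivAt_firstIntegral_eq_zero hy₁ hy₂ hy₃ h₁₂ h₃₂ hL, hy₂⟩⟩
  set D : ℂ → ℂ := fun s => 1 - Cb * Complex.exp (Complex.exp s)
  obtain rfl : x₁ = fun s => (D s + Complex.exp s) / D s := funext fun s => by rw [hx₁]; ring
  obtain rfl : x₂ = fun _ => 1 := funext hx₂
  obtain rfl : x₃ = fun s => (D s + Complex.exp s * (1 - D s)) / D s :=
    funext fun s => by rw [hx₃]; ring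
  have hE := Complex.hasDerivAt_exp τ
  have hD : HasDerivAt D _ τ := hasDerivAt_one_sub_mul_exp_exp Cb τ
  exact ⟨hasDerivAt_explicitSolution₁ hE hD hden, hasDerivAt_const τ 1,
    hasDerivAt_explicitSolution₃ hE hD hden⟩
end
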